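/- Explicit formula for the Petersson cocycle: for g, h ∈ SL₂(ℝ), ω(g,h) = (1/4)(sign(c_g(−d_g)) + sign(c_h(−d_h)) − sign(c_{gh}(−d_{gh})) − sign(c_g(−d_g)·c_h(−d_h)·c_{gh}(−d_{gh}))), where for a matrix with bottom row (c,d), c(−d) denotes c if c ≠ 0 and −d if c = 0. -/

import Mathlib

/-!
By the cocycle relation `j(gh, z) = j(g, h·z) j(h, z)` the real parts of the logarithms cancel,
so `ω(g, h) = (arg a + arg b - arg (ab)) / 2π` with `a = j(g, h·z)`, `b = j(h, z)`. This is an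
integer, and since each argument lies in `(-π, π]` it is pinned down by which of the two halves
`(0, π]` and `(-π, 0]` contain `arg a`, `arg b` and `arg (ab)`. Finally `j(g, z) = cz + d` has
argument in `(0, π]` exactly when `c > 0`, or `c = 0` and `d < 0`, i.e. when `c(-d) > 0`.
-/

open Matrix UpperHalfPlane Complex

abbrev SL2R := Matrix.SpecialLinearGroup (Fin 2) ℝ

/-- The automorphy factor `j(g,z) = cz + d`. -/
noncomputable def jFac (g : SL2R) (z : ℂ) : ℂ :=
  (g.1 1 0 : ℝ) * z + (g.1 1 1 : ℝ)

/-- Petersson's 2-cocycle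
`ω(g,h) = (1/(2πi))(Log j(g, h·z) + Log j(h,z) − Log j(gh,z))`. -/
noncomputable def omegaC (g h : SL2R) (z : ℍ) : ℂ :=
  (1 / (2 * Real.pi * Complex.I)) *
    (Complex.log (jFac g ((h • z : ℍ) : ℂ)) + Complex.log (jFac h (z : ℂ))
      - Complex.log (jFac (g * h) (z : ℂ)))

/-- `c(−d)`: equal to `c` if `c ≠ 0` and to `−d` if `c = 0`, for the bottom row `(c,d)`. -/
noncomputable def cStar (g : SL2R) : ℝ :=
  if g.1 1 0 ≠ 0 then g.1 1 0 else -g.1 1 1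

open Real

theorem Real.sign_mul (x y : ℝ) : sign (x * y) = sign x * sign y := by
  rcases lt_trichotomy x 0 with hx | hx | hx <;> rcases lt_trichotomy y 0 with hy | hy | hy <;>
    simp [sign_of_pos, sign_of_neg, hx, hy, mul_pos_of_neg_of_neg, mul_neg_of_pos_of_neg,
      mul_neg_of_neg_of_pos]

theorem Real.sign_eq_ite_of_ne_zero {x : ℝ} (hx : x ≠ 0) :
    sign x = if 0 < x then 1 else -1 := by
  rcases hx.lt_or_gt with hx | hx
  · simp [sign_of_neg hx, hx.not_gt]
  · simp [sign_of_pos hx, hx]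

namespace Complex

theorem zero_lt_arg_iff {w : ℂ} : 0 < arg w ↔ 0 < w.im ∨ w.im = 0 ∧ w.re < 0 := by
  rw [lt_iff_le_and_ne, ne_comm, Ne, arg_nonneg_iff, arg_eq_zero_iff]
  grind

theorem log_add_log_sub_log_mul {a b : ℂ} (ha : a ≠ 0) (hb : b ≠ 0) :
    log a + log b - log (a * b) = (arg a + arg b - arg (a * b) : ℝ) * Complex.I := by
  simp only [log, norm_mul, Real.log_mul (norm_ne_zero_iff.mpr ha) (norm_ne_zero_iff.mpr hb)]
  push_cast
  ring

noncomputable def argSign (w : ℂ) : ℝ := if 0 < arg w then 1 else -1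

theorem arg_add_arg_sub_arg_mul {a b : ℂ} (ha : a ≠ 0) (hb : b ≠ 0) :
    arg a + arg b - arg (a * b) = π / 2 *
      (argSign a + argSign b - argSign (a * b) - argSign a * argSign b * argSign (a * b)) := by
  obtain ⟨k, hk⟩ : ∃ k : ℤ, arg a + arg b - arg (a * b) = 2 * π * k := by
    have h := arg_mul_coe_angle ha hb
    rw [← Real.Angle.coe_add, Real.Angle.angle_eq_iff_two_pi_dvd_sub] at h
    obtain ⟨k, hk⟩ := h
    exact ⟨-k, by push_cast; linarith⟩
  have := neg_pi_lt_arg a; have := neg_pi_lt_arg b; have := neg_pi_lt_arg (a * b)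
  have := arg_le_pi a; have := arg_le_pi b; have := arg_le_pi (a * b)
  have hk_bound : -2 < k ∧ k < 2 := by
    constructor
    · have : (-2 : ℝ) < k := by nlinarith [pi_pos]
      exact_mod_cast this
    · have : (k : ℝ) < 2 := by nlinarith [pi_pos]
      exact_mod_cast this
  obtain rfl | rfl | rfl : k = -1 ∨ k = 0 ∨ k = 1 := by omega
  -- each of the 8 sign patterns confines the three arguments so that only one `k` survives
  all_goals push_cast at hk; unfold argSign; split_ifs <;> linarith

end Complex

theorem jFac_eq_denom (g : SL2R) (z : ℂ) : jFac g z = denom (SpecialLinearGroup.mapGL ℝ g) z :=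
  rfl

theorem jFac_ne_zero (g : SL2R) (z : ℍ) : jFac g z ≠ 0 :=
  denom_ne_zero (SpecialLinearGroup.mapGL ℝ g) z

theorem jFac_mul (g h : SL2R) (z : ℍ) : jFac (g * h) z = jFac g ↑(h • z) * jFac h z := by
  rw [jFac_eq_denom, map_mul, denom_cocycle _ _ z.im_ne_zero, coe_specialLinearGroup_apply]
  rfl

theorem cStar_ne_zero (g : SL2R) : cStar g ≠ 0 := by
  unfold cStar
  split_ifs with hc
  · exact hc
  · have := g.det_coe
    rw [det_fin_two] at this
    intro hd
    simp_all

theorem zero_lt_arg_jFac_iff (g : SL2R) (z : ℍ) : 0 < arg (jFac g z) ↔ 0 < cStar g := by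
  have him : (jFac g z).im = g.1 1 0 * z.im := by simp [jFac]
  rw [zero_lt_arg_iff, him, cStar]
  split_ifs with hc
  · simp [hc, z.im_ne_zero, z.im_pos, mul_pos_iff_of_pos_right]
  · simp_all [jFac]

theorem argSign_jFac (g : SL2R) (z : ℍ) : argSign (jFac g z) = sign (cStar g) := by
  simp only [argSign, zero_lt_arg_jFac_iff, sign_eq_ite_of_ne_zero (cStar_ne_zero g)]

/-- Asai's explicit formula for the Petersson cocycle. -/
theorem omegaC_explicit (g h : SL2R) (z : ℍ) :
    omegaC g h z = ((1 / 4 : ℝ) * (Real.sign (cStar g) + Real.sign (cStar h)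
      - Real.sign (cStar (g * h))
      - Real.sign (cStar g * cStar h * cStar (g * h))) : ℝ) := by
  have hg := jFac_ne_zero g (h • z)
  have hh := jFac_ne_zero h z
  rw [omegaC, jFac_mul, log_add_log_sub_log_mul hg hh, arg_add_arg_sub_arg_mul hg hh,
    ← jFac_mul, argSign_jFac, argSign_jFac, argSign_jFac, Real.sign_mul, Real.sign_mul]
  field_simp
  push_cast
  ring
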